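/- Assume ψ is C², A₀, A₁, A₂ are C¹, and equations (E1) and (E2) hold at every point of ℝ × ℝ². Set V(s) := s^γ/(γ−1). Then at every point of ℝ × ℝ² the local energy balance holds: ∂_t( (ε^{2+2δ}/2) |D_tψ|² + (ε²/2)(|D₁ψ|² + |D₂ψ|²) + V(|ψ|²) ) = ε² ( ∂₁ Re(conj(D_tψ) D₁ψ) + ∂₂ Re(conj(D_tψ) D₂ψ) ). -/

import Mathlib

noncomputable section

/-- Spacetime points `(t, x₁, x₂) ∈ ℝ × ℝ²`. -/
abbrev Spt := ℝ × ℝ × ℝ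

/-- Partial derivative in the time variable. -/
def ptd {E : Type*} [NormedAddCommGroup E] [NormedSpace ℝ E] (f : Spt → E) (p : Spt) : E :=
  fderiv ℝ f p (1, 0, 0)

/-- Partial derivative in the first spatial variable. -/
def px1 {E : Type*} [NormedAddCommGroup E] [NormedSpace ℝ E] (f : Spt → E) (p : Spt) : E :=
  fderiv ℝ f p (0, 1, 0)

/-- Partial derivative in the second spatial variable. -/
def px2 {E : Type*} [NormedAddCommGroup E] [NormedSpace ℝ E] (f : Spt → E) (p : Spt) : E :=
  fderiv ℝ f p (0, 0, 1)

/-- Covariant time derivative `D_t ψ = ∂_t ψ − i ε⁻¹ A₀ ψ`. -/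
def Dt (ε : ℝ) (A₀ : Spt → ℝ) (ψ : Spt → ℂ) (p : Spt) : ℂ :=
  ptd ψ p - Complex.I * ((ε⁻¹ : ℝ) : ℂ) * ((A₀ p : ℝ) : ℂ) * ψ p

/-- Covariant derivative `D₁ ψ = ∂₁ ψ − i ε^{δ−1} A₁ ψ`. -/
def D1 (ε δ : ℝ) (A₁ : Spt → ℝ) (ψ : Spt → ℂ) (p : Spt) : ℂ :=
  px1 ψ p - Complex.I * ((ε ^ (δ - 1) : ℝ) : ℂ) * ((A₁ p : ℝ) : ℂ) * ψ p

/-- Covariant derivative `D₂ ψ = ∂₂ ψ − i ε^{δ−1} A₂ ψ`. -/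
def D2 (ε δ : ℝ) (A₂ : Spt → ℝ) (ψ : Spt → ℂ) (p : Spt) : ℂ :=
  px2 ψ p - Complex.I * ((ε ^ (δ - 1) : ℝ) : ℂ) * ((A₂ p : ℝ) : ℂ) * ψ p

/-!
Write each covariant derivative as `D = ∂ − i a` with a real connection coefficient `a`. The
gauge terms drop out of `∂|f|²` and of `∂ Re(conj f g)`, so `∂_t` of the energy density is
`ε^{2+2δ} Re(conj(D_tψ) D_tD_tψ) + ε² Σⱼ Re(conj(Dⱼψ) D_tDⱼψ) + 2V'(|ψ|²) Re(conj ψ D_tψ)`,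
while the right-hand side is `ε² Σⱼ (Re(conj(DⱼD_tψ) Dⱼψ) + Re(conj(D_tψ) DⱼDⱼψ))`.
Testing (E1) against `D_tψ` turns the first and last terms on the left into
`ε² Σⱼ Re(conj(D_tψ) DⱼDⱼψ)`. Commuting `D_tDⱼ = DⱼD_t − i F_{tj} ψ`, with curvature
`F_{tj} = ε⁻¹(ε^δ ∂_tAⱼ − ∂ⱼA₀)`, leaves `Σⱼ F_{tj} Im(conj ψ Dⱼψ)`, which vanishes by (E2).
-/

open Complex ComplexConjugate

section CovariantDerivative

variable {E : Type*} [NormedAddCommGroup E] [NormedSpace ℝ E] {f g : E → ℂ} {p : E}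

def covDeriv (a : E → ℝ) (v : E) (f : E → ℂ) (p : E) : ℂ :=
  fderiv ℝ f p v - I * a p * f p

theorem ContDiffAt.differentiableAt_fderiv (hf : ContDiffAt ℝ 2 f p) :
    DifferentiableAt ℝ (fderiv ℝ f) p :=
  (hf.fderiv_right (m := 1) le_rfl).differentiableAt one_ne_zero

theorem fderiv_fderiv_apply_comm (hf : ContDiffAt ℝ 2 f p) (v w : E) :
    fderiv ℝ (fun q => fderiv ℝ f q w) p v = fderiv ℝ (fun q => fderiv ℝ f q v) p w := by
  rw [fderiv_clm_apply hf.differentiableAt_fderiv (differentiableAt_const w),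
    fderiv_clm_apply hf.differentiableAt_fderiv (differentiableAt_const v)]
  simpa using hf.isSymmSndFDerivAt (by simp) v w

theorem ContDiffAt.differentiableAt_covDeriv {a : E → ℝ} (hf : ContDiffAt ℝ 2 f p)
    (ha : DifferentiableAt ℝ a p) (v : E) : DifferentiableAt ℝ (covDeriv a v f) p := by
  have hf' := hf.differentiableAt_fderiv
  have hfp := hf.differentiableAt two_ne_zero
  unfold covDeriv
  fun_prop

theorem fderiv_covDeriv_apply {b : E → ℝ} (hf : ContDiffAt ℝ 2 f p)
    (hb : DifferentiableAt ℝ b p) (v w : E) :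
    fderiv ℝ (covDeriv b w f) p v = fderiv ℝ (fun q => fderiv ℝ f q w) p v
      - I * fderiv ℝ b p v * f p - I * b p * fderiv ℝ f p v := by
  have hf' : DifferentiableAt ℝ (fun q => fderiv ℝ f q w) p :=
    hf.differentiableAt_fderiv.clm_apply (differentiableAt_const w)
  have hb' : HasFDerivAt (fun q => (b q : ℂ)) (ofRealCLM.comp (fderiv ℝ b p)) p :=
    ofRealCLM.hasFDerivAt.comp p hb.hasFDerivAt
  have h := hf'.hasFDerivAt.fun_sub
    ((hb'.const_mul I).fun_mul (hf.differentiableAt two_ne_zero).hasFDerivAt)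
  rw [show covDeriv b w f = fun q => fderiv ℝ f q w - I * b q * f q from rfl, h.fderiv]
  simp only [sub_apply, add_apply, smul_apply, smul_eq_mul, ContinuousLinearMap.comp_apply,
    ofRealCLM_apply]
  ring

theorem covDeriv_covDeriv_comm {a b : E → ℝ} (hf : ContDiffAt ℝ 2 f p)
    (ha : DifferentiableAt ℝ a p) (hb : DifferentiableAt ℝ b p) (v w : E) :
    covDeriv a v (covDeriv b w f) p
      = covDeriv b w (covDeriv a v f) p - I * (fderiv ℝ b p v - fderiv ℝ a p w : ℝ) * f p := by
  change fderiv ℝ (covDeriv b w f) p v - I * a p * covDeriv b w f p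
    = fderiv ℝ (covDeriv a v f) p w - I * b p * covDeriv a v f p - _
  rw [fderiv_covDeriv_apply hf hb, fderiv_covDeriv_apply hf ha, fderiv_fderiv_apply_comm hf]
  simp only [covDeriv]
  push_cast
  ring

theorem fderiv_re_conj_mul_apply (a : E → ℝ) (hf : DifferentiableAt ℝ f p)
    (hg : DifferentiableAt ℝ g p) (v : E) :
    fderiv ℝ (fun q => (conj (f q) * g q).re) p v
      = (conj (covDeriv a v f p) * g p).re + (conj (f p) * covDeriv a v g p).re := by
  have h := fderiv_inner_apply ℝ hf hg v
  simp only [Complex.inner, mul_comm (g _), mul_comm (fderiv ℝ g p v)] at h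
  rw [h, ← add_re, ← add_re, add_comm]
  congr 1
  simp only [covDeriv, map_sub, map_mul, conj_I, conj_ofReal]
  ring

@[fun_prop]
theorem DifferentiableAt.normSq (hf : DifferentiableAt ℝ f p) :
    DifferentiableAt ℝ (fun q => normSq (f q)) p := by
  simpa only [normSq_eq_norm_sq] using hf.norm_sq ℝ

theorem fderiv_normSq_apply (a : E → ℝ) (hf : DifferentiableAt ℝ f p) (v : E) :
    fderiv ℝ (fun q => normSq (f q)) p v = 2 * (conj (f p) * covDeriv a v f p).re := by
  have h : (fun q => normSq (f q)) = fun q => (conj (f q) * f q).re := by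
    funext q
    simp [mul_comm, mul_conj]
  rw [h, fderiv_re_conj_mul_apply a hf hf]
  simp only [mul_re, conj_re, conj_im]
  ring

theorem fderiv_energyDensity_apply (a : E → ℝ) {B C₁ C₂ : E → ℂ}
    (hB : DifferentiableAt ℝ B p) (hC₁ : DifferentiableAt ℝ C₁ p)
    (hC₂ : DifferentiableAt ℝ C₂ p) (hf : DifferentiableAt ℝ f p) (κ μ : ℝ) {γ : ℝ}
    (hγ : 1 ≤ γ) (v : E) :
    fderiv ℝ (fun q => κ / 2 * normSq (B q) + μ / 2 * (normSq (C₁ q) + normSq (C₂ q))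
        + normSq (f q) ^ γ / (γ - 1)) p v
      = κ / 2 * (2 * (conj (B p) * covDeriv a v B p).re)
        + μ / 2 * (2 * (conj (C₁ p) * covDeriv a v C₁ p).re
          + 2 * (conj (C₂ p) * covDeriv a v C₂ p).re)
        + γ / (γ - 1) * normSq (f p) ^ (γ - 1) * (2 * (conj (f p) * covDeriv a v f p).re) := by
  have hV : HasFDerivAt (fun q => normSq (f q) ^ γ / (γ - 1))
      ((γ - 1)⁻¹ • (γ * normSq (f p) ^ (γ - 1)) • fderiv ℝ (fun q => normSq (f q)) p) p := by
    simpa only [div_eq_inv_mul] using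
      (hf.normSq.hasFDerivAt.rpow_const (Or.inr hγ)).const_mul (γ - 1)⁻¹
  rw [fderiv_fun_add (by fun_prop) hV.differentiableAt, hV.fderiv,
    fderiv_fun_add (by fun_prop) (by fun_prop), fderiv_const_mul (by fun_prop),
    fderiv_const_mul (by fun_prop), fderiv_fun_add (by fun_prop) (by fun_prop)]
  simp only [add_apply, smul_apply, smul_eq_mul]
  rw [fderiv_normSq_apply a hB, fderiv_normSq_apply a hC₁, fderiv_normSq_apply a hC₂,
    fderiv_normSq_apply a hf]
  ring

theorem fderiv_rpow_mul_sub_fderiv_inv_mul_eq {ε : ℝ} (hε : 0 < ε) {δ X : ℝ} {A₀ A : E → ℝ}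
    (hA₀ : DifferentiableAt ℝ A₀ p) (hA : DifferentiableAt ℝ A p) (v w : E)
    (h : ε ^ δ * fderiv ℝ A p v - fderiv ℝ A₀ p w = ε * X) :
    fderiv ℝ (fun q => ε ^ (δ - 1) * A q) p v - fderiv ℝ (fun q => ε⁻¹ * A₀ q) p w = X := by
  rw [fderiv_const_mul hA, fderiv_const_mul hA₀, Real.rpow_sub_one hε.ne']
  simp only [smul_apply, smul_eq_mul]
  field_simp
  linear_combination h

end CovariantDerivative

theorem csh_pointwise_energy_identity (ε κ W F₁ F₂ : ℝ) (z b c₁ c₂ bt c₁₁ c₂₂ y₁ y₂ : ℂ)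
    (hE1 : I * ε * b - ((κ / 2 : ℝ) : ℂ) * bt + ((ε ^ 2 / 2 : ℝ) : ℂ) * (c₁₁ + c₂₂)
      - (W : ℂ) * z = 0)
    (hF₁ : F₁ = -(conj z * c₂).im) (hF₂ : F₂ = (conj z * c₁).im) :
    κ / 2 * (2 * (conj b * bt).re)
        + ε ^ 2 / 2 * (2 * (conj c₁ * (y₁ - I * F₁ * z)).re
          + 2 * (conj c₂ * (y₂ - I * F₂ * z)).re)
        + W * (2 * (conj z * b).re)
      = ε ^ 2 * ((conj y₁ * c₁).re + (conj b * c₁₁).re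
          + ((conj y₂ * c₂).re + (conj b * c₂₂).re)) := by
  have hE1_tested : κ * (conj b * bt).re + 2 * W * (conj z * b).re
      = ε ^ 2 * (conj b * (c₁₁ + c₂₂)).re := by
    have h := congrArg (fun w => (conj b * w).re) hE1
    simp only [mul_re, mul_im, sub_re, sub_im, add_re, add_im, conj_re, conj_im, I_re, I_im,
      ofReal_re, ofReal_im, zero_re, zero_im] at h ⊢
    linear_combination (-2) * h
  have hcurvature : (conj c₁ * (I * F₁ * z)).re + (conj c₂ * (I * F₂ * z)).re = 0 := by
    subst hF₁ hF₂
    simp only [mul_re, mul_im, conj_re, conj_im, I_re, I_im, ofReal_re, ofReal_im]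
    ring
  have hsymm (u w : ℂ) : (conj u * w).re = (conj w * u).re := by
    simp only [mul_re, conj_re, conj_im]
    ring
  simp only [mul_sub, sub_re, mul_add, add_re] at hE1_tested ⊢
  rw [hsymm c₁ y₁, hsymm c₂ y₂]
  linear_combination hE1_tested - ε ^ 2 * hcurvature

theorem Dt_eq_covDeriv (ε : ℝ) (A₀ : Spt → ℝ) :
    Dt ε A₀ = covDeriv (fun q => ε⁻¹ * A₀ q) (1, 0, 0) := by
  funext ψ p
  simp only [Dt, ptd, covDeriv]
  push_cast
  ring

theorem D1_eq_covDeriv (ε δ : ℝ) (A₁ : Spt → ℝ) :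
    D1 ε δ A₁ = covDeriv (fun q => ε ^ (δ - 1) * A₁ q) (0, 1, 0) := by
  funext ψ p
  simp only [D1, px1, covDeriv]
  push_cast
  ring

theorem D2_eq_covDeriv (ε δ : ℝ) (A₂ : Spt → ℝ) :
    D2 ε δ A₂ = covDeriv (fun q => ε ^ (δ - 1) * A₂ q) (0, 0, 1) := by
  funext ψ p
  simp only [D2, px2, covDeriv]
  push_cast
  ring

theorem csh_local_energy_balance_general (ε δ γ : ℝ) (hε : 0 < ε) (hγ : 1 < γ)
    (ψ : Spt → ℂ) (A₀ A₁ A₂ : Spt → ℝ)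
    (hψ : ContDiff ℝ 2 ψ) (hA₀ : ContDiff ℝ 1 A₀)
    (hA₁ : ContDiff ℝ 1 A₁) (hA₂ : ContDiff ℝ 1 A₂)
    (hE1 : ∀ p : Spt,
      Complex.I * (ε : ℂ) * Dt ε A₀ ψ p
        - ((ε ^ (2 + 2 * δ) / 2 : ℝ) : ℂ) * Dt ε A₀ (Dt ε A₀ ψ) p
        + ((ε ^ 2 / 2 : ℝ) : ℂ) *
            (D1 ε δ A₁ (D1 ε δ A₁ ψ) p + D2 ε δ A₂ (D2 ε δ A₂ ψ) p)
        - ((γ / (γ - 1) * Complex.normSq (ψ p) ^ (γ - 1) : ℝ) : ℂ) * ψ p = 0)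
    (hE2a : ∀ p : Spt,
      ε ^ δ * ptd A₁ p - px1 A₀ p
        = -(ε * ((starRingEnd ℂ) (ψ p) * D2 ε δ A₂ ψ p).im))
    (hE2b : ∀ p : Spt,
      ε ^ δ * ptd A₂ p - px2 A₀ p
        = ε * ((starRingEnd ℂ) (ψ p) * D1 ε δ A₁ ψ p).im) :
    ∀ p : Spt,
      ptd (fun q => ε ^ (2 + 2 * δ) / 2 * Complex.normSq (Dt ε A₀ ψ q)
            + ε ^ 2 / 2 * (Complex.normSq (D1 ε δ A₁ ψ q) + Complex.normSq (D2 ε δ A₂ ψ q))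
            + Complex.normSq (ψ q) ^ γ / (γ - 1)) p
        = ε ^ 2 *
            (px1 (fun q => ((starRingEnd ℂ) (Dt ε A₀ ψ q) * D1 ε δ A₁ ψ q).re) p
              + px2 (fun q => ((starRingEnd ℂ) (Dt ε A₀ ψ q) * D2 ε δ A₂ ψ q).re) p) := by
  intro p
  have hψp : ContDiffAt ℝ 2 ψ p := hψ.contDiffAt
  have hA₀p := hA₀.differentiable one_ne_zero p
  have hA₁p := hA₁.differentiable one_ne_zero p
  have hA₂p := hA₂.differentiable one_ne_zero p
  have hF₁ := fderiv_rpow_mul_sub_fderiv_inv_mul_eq hε hA₀p hA₁p (1, 0, 0) (0, 1, 0)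
    ((hE2a p).trans (neg_mul_eq_mul_neg _ _))
  have hF₂ := fderiv_rpow_mul_sub_fderiv_inv_mul_eq hε hA₀p hA₂p (1, 0, 0) (0, 0, 1) (hE2b p)
  simp only [Dt_eq_covDeriv, D1_eq_covDeriv, D2_eq_covDeriv] at hE1 hF₁ hF₂ ⊢
  have hψd := hψp.differentiableAt two_ne_zero
  have ha₀ := hA₀p.const_mul ε⁻¹
  have ha₁ := hA₁p.const_mul (ε ^ (δ - 1))
  have ha₂ := hA₂p.const_mul (ε ^ (δ - 1))
  have hB := hψp.differentiableAt_covDeriv ha₀ (1, 0, 0)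
  have hC₁ := hψp.differentiableAt_covDeriv ha₁ (0, 1, 0)
  have hC₂ := hψp.differentiableAt_covDeriv ha₂ (0, 0, 1)
  rw [ptd, fderiv_energyDensity_apply _ hB hC₁ hC₂ hψd _ _ hγ.le,
    covDeriv_covDeriv_comm hψp ha₀ ha₁, covDeriv_covDeriv_comm hψp ha₀ ha₂, px1, px2,
    fderiv_re_conj_mul_apply _ hB hC₁, fderiv_re_conj_mul_apply _ hB hC₂]
  exact csh_pointwise_energy_identity _ _ _ _ _ _ _ _ _ _ _ _ _ _ (hE1 p) hF₁ hF₂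

/-- Local energy balance for the scaled Chern–Simons–Higgs system:
`∂_t((ε^{2+2δ}/2)|D_tψ|² + (ε²/2)(|D₁ψ|² + |D₂ψ|²) + V(|ψ|²))
  = ε²(∂₁ Re(conj(D_tψ) D₁ψ) + ∂₂ Re(conj(D_tψ) D₂ψ))` with `V(s) = s^γ/(γ−1)`. -/
theorem csh_local_energy_balance (ε δ γ : ℝ) (hε : 0 < ε) (hδ : 0 < δ) (hγ : 1 < γ)
    (ψ : Spt → ℂ) (A₀ A₁ A₂ : Spt → ℝ)
    (hψ : ContDiff ℝ 2 ψ) (hA₀ : ContDiff ℝ 1 A₀)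
    (hA₁ : ContDiff ℝ 1 A₁) (hA₂ : ContDiff ℝ 1 A₂)
    (hE1 : ∀ p : Spt,
      Complex.I * (ε : ℂ) * Dt ε A₀ ψ p
        - ((ε ^ (2 + 2 * δ) / 2 : ℝ) : ℂ) * Dt ε A₀ (Dt ε A₀ ψ) p
        + ((ε ^ 2 / 2 : ℝ) : ℂ) *
            (D1 ε δ A₁ (D1 ε δ A₁ ψ) p + D2 ε δ A₂ (D2 ε δ A₂ ψ) p)
        - ((γ / (γ - 1) * Complex.normSq (ψ p) ^ (γ - 1) : ℝ) : ℂ) * ψ p = 0)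
    (hE2a : ∀ p : Spt,
      ε ^ δ * ptd A₁ p - px1 A₀ p
        = -(ε * ((starRingEnd ℂ) (ψ p) * D2 ε δ A₂ ψ p).im))
    (hE2b : ∀ p : Spt,
      ε ^ δ * ptd A₂ p - px2 A₀ p
        = ε * ((starRingEnd ℂ) (ψ p) * D1 ε δ A₁ ψ p).im) :
    ∀ p : Spt,
      ptd (fun q => ε ^ (2 + 2 * δ) / 2 * Complex.normSq (Dt ε A₀ ψ q)
            + ε ^ 2 / 2 * (Complex.normSq (D1 ε δ A₁ ψ q) + Complex.normSq (D2 ε δ A₂ ψ q))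
            + Complex.normSq (ψ q) ^ γ / (γ - 1)) p
        = ε ^ 2 *
            (px1 (fun q => ((starRingEnd ℂ) (Dt ε A₀ ψ q) * D1 ε δ A₁ ψ q).re) p
              + px2 (fun q => ((starRingEnd ℂ) (Dt ε A₀ ψ q) * D2 ε δ A₂ ψ q).re) p) :=
  csh_local_energy_balance_general ε δ γ hε hγ ψ A₀ A₁ A₂ hψ hA₀ hA₁ hA₂ hE1 hE2a hE2b

end
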